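/- The triple product integral of orthonormal probabilists' Hermite polynomials ∫_ℝ H_k(y) H_l(y) H_m(y) exp(-y²/2)/sqrt(2π) dy vanishes unless k+l+m is even and |k-l| ≤ m ≤ k+l, in which case it equals [C(k, g-m) C(l, g-m) C(m, g-k)]^{1/2} where g = (k+l+m)/2. -/

import Mathlib

open MeasureTheory Real Filter

/-- The `n`-th orthonormal probabilists' Hermite polynomial. -/
noncomputable def H (n : ℕ) : ℝ → ℝ := fun y =>
  ((-1 : ℝ) ^ n / Real.sqrt n.factorial) * Real.exp (y ^ 2 / 2) *
    iteratedDeriv n (fun t : ℝ => Real.exp (-t ^ 2 / 2)) y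

/-- Standard Gaussian density. -/
noncomputable def gauss : ℝ → ℝ := fun y => Real.exp (-y ^ 2 / 2) / Real.sqrt (2 * Real.pi)

/-!
With `He_n = Polynomial.hermite n` the monic Hermite polynomials, `H n = He_n / √n!`. Gaussian
integration by parts (Stein's identity `E[P'(Z)] = E[Z P(Z)]`) together with
`He_{n+1} = X He_n - He_n'` gives `E[P He_{n+1}] = E[P' He_n]`, and with `He_n' = n He_{n-1}`
the triple integral `T(k,l,m) = E[He_k He_l He_m]` satisfies
`T(k,l,m+1) = k T(k-1,l,m) + l T(k,l-1,m)` and `T(k,l,0) = δ_{kl} k!`. Writing `k = b + c`,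
`l = a + c`, `m = a + b`, the closed form `k! l! m! / (a! b! c!)` (and `0` when no such `a, b, c`
exist) satisfies the same recursion; dividing by `√(k! l! m!)` gives the binomial formula.
-/

open Polynomial
open scoped Nat

namespace Polynomial

theorem derivative_hermite_succ (n : ℕ) :
    derivative (hermite (n + 1)) = ((n + 1 : ℕ) : ℤ[X]) * hermite n := by
  induction n with
  | zero => simp
  | succ n ih =>
    rw [hermite_succ (n + 1), derivative_sub, derivative_mul, ih, derivative_natCast_mul,
      derivative_X, hermite_succ n]
    push_cast
    ring

theorem derivative_hermite (n : ℕ) : derivative (hermite n) = (n : ℤ[X]) * hermite (n - 1) := by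
  cases n with
  | zero => simp
  | succ n => exact derivative_hermite_succ n

end Polynomial

theorem hasDerivAt_gauss (x : ℝ) : HasDerivAt gauss (-x * gauss x) x := by
  have h : HasDerivAt (fun t : ℝ => -t ^ 2 / 2) (-x) x :=
    ((hasDerivAt_pow 2 x).fun_neg.div_const 2).congr_deriv (by ring)
  exact (h.exp.div_const (√(2 * π))).congr_deriv (by simp only [gauss]; ring)

theorem integral_gauss : ∫ x, gauss x = 1 := by
  have h := integral_gaussian (1 / 2)
  simp only [gauss, integral_div]
  rw [show (fun x : ℝ => rexp (-x ^ 2 / 2)) = fun x => rexp (-(1 / 2) * x ^ 2) by ext; ring_nf, h,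
    show π / (1 / 2) = 2 * π by ring, div_self (by positivity)]

theorem integrable_pow_mul_gauss (n : ℕ) : Integrable fun x : ℝ => x ^ n * gauss x := by
  have h := (integrable_rpow_mul_exp_neg_mul_sq (b := 1 / 2) (by norm_num)
    (s := n) (by linarith [n.cast_nonneg (α := ℝ)])).div_const (√(2 * π))
  convert h using 2 with x
  simp only [gauss, rpow_natCast]; ring_nf

theorem integrable_aeval_mul_gauss (P : ℤ[X]) : Integrable fun x : ℝ => aeval x P * gauss x := by
  induction P using Polynomial.induction_on' with
  | add p q hp hq => simp only [map_add, add_mul]; exact hp.add hq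
  | monomial n a =>
    simpa only [aeval_monomial, algebraMap_int_eq, eq_intCast, mul_assoc] using
      (integrable_pow_mul_gauss n).const_mul (a : ℝ)

/-- `E[P(Z)]` for a standard normal `Z`. -/
noncomputable def gaussianExpectation : ℤ[X] →+ ℝ where
  toFun P := ∫ x, aeval x P * gauss x
  map_zero' := by simp
  map_add' P Q := by
    simp only [map_add, add_mul]
    exact integral_add (integrable_aeval_mul_gauss P) (integrable_aeval_mul_gauss Q)

theorem gaussianExpectation_apply (P : ℤ[X]) :
    gaussianExpectation P = ∫ x, aeval x P * gauss x := rfl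

theorem gaussianExpectation_one : gaussianExpectation 1 = 1 := by
  simp [gaussianExpectation_apply, integral_gauss]

theorem gaussianExpectation_derivative (P : ℤ[X]) :
    gaussianExpectation (derivative P) = gaussianExpectation (X * P) := by
  have hderiv (x : ℝ) : HasDerivAt (fun t => aeval t P * gauss t)
      (aeval x (derivative P - X * P) * gauss x) x := by
    refine ((P.hasDerivAt_aeval x).mul (hasDerivAt_gauss x)).congr_deriv ?_
    simp only [map_sub, map_mul, aeval_X]; ring
  rw [← sub_eq_zero, ← map_sub]
  exact integral_eq_zero_of_hasDerivAt_of_integrable hderiv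
    (integrable_aeval_mul_gauss _) (integrable_aeval_mul_gauss _)

theorem gaussianExpectation_mul_hermite_succ (P : ℤ[X]) (n : ℕ) :
    gaussianExpectation (P * hermite (n + 1)) = gaussianExpectation (derivative P * hermite n) := by
  have h : P * hermite (n + 1) =
      X * (P * hermite n) - derivative (P * hermite n) + derivative P * hermite n := by
    rw [hermite_succ, derivative_mul]; ring
  rw [h, map_add, map_sub, gaussianExpectation_derivative, sub_self, zero_add]

theorem gaussianExpectation_hermite_mul_hermite (k l : ℕ) :
    gaussianExpectation (hermite k * hermite l) = if k = l then (k ! : ℝ) else 0 := by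
  induction l generalizing k with
  | zero =>
    cases k with
    | zero => rw [hermite_zero, C_1, mul_one, gaussianExpectation_one]; simp
    | succ k =>
      rw [hermite_zero, C_1, mul_one, ← one_mul (hermite _),
        gaussianExpectation_mul_hermite_succ]
      simp
  | succ l ih =>
    rw [gaussianExpectation_mul_hermite_succ, derivative_hermite, mul_assoc, ← nsmul_eq_mul,
      map_nsmul, ih, nsmul_eq_mul]
    cases k with
    | zero => simp
    | succ k => simp [Nat.factorial_succ]

theorem gaussianExpectation_hermite_mul_hermite_mul_hermite_succ (k l m : ℕ) :
    gaussianExpectation (hermite k * hermite l * hermite (m + 1)) =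
      k * gaussianExpectation (hermite (k - 1) * hermite l * hermite m) +
        l * gaussianExpectation (hermite k * hermite (l - 1) * hermite m) := by
  have h : derivative (hermite k * hermite l) * hermite m =
      k • (hermite (k - 1) * hermite l * hermite m) +
        l • (hermite k * hermite (l - 1) * hermite m) := by
    rw [derivative_mul, derivative_hermite, derivative_hermite, nsmul_eq_mul, nsmul_eq_mul]
    ring
  rw [gaussianExpectation_mul_hermite_succ, h, map_add, map_nsmul, map_nsmul, nsmul_eq_mul,
    nsmul_eq_mul]

theorem exists_add_iff_even_and_triangle (k l m : ℕ) :
    (∃ a b c, k = b + c ∧ l = a + c ∧ m = a + b) ↔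
      Even (k + l + m) ∧ k - l ≤ m ∧ l - k ≤ m ∧ m ≤ k + l := by
  rw [Nat.even_iff]
  constructor
  · rintro ⟨a, b, c, rfl, rfl, rfl⟩
    omega
  · rintro ⟨h0, h1, h2, h3⟩
    exact ⟨(l + m - k) / 2, (k + m - l) / 2, (k + l - m) / 2, by omega, by omega, by omega⟩

/-- `k! l! m! / (a! b! c!)` when `k = b + c`, `l = a + c`, `m = a + b`, and `0` when there are no
such `a b c`. -/
noncomputable def tripleCoeff (k l m : ℕ) : ℝ :=
  open Classical in
  if ∃ a b c, k = b + c ∧ l = a + c ∧ m = a + b then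
    (k ! * l ! * m ! : ℝ) /
      (((k + l + m) / 2 - k)! * ((k + l + m) / 2 - l)! * ((k + l + m) / 2 - m)!)
  else 0

theorem tripleCoeff_of_eq_add {k l m a b c : ℕ} (hk : k = b + c) (hl : l = a + c)
    (hm : m = a + b) : tripleCoeff k l m = k ! * l ! * m ! / (a ! * b ! * c !) := by
  rw [tripleCoeff, if_pos ⟨a, b, c, hk, hl, hm⟩]
  subst hk hl hm
  rw [show (b + c + (a + c) + (a + b)) / 2 = a + b + c by omega,
    show a + b + c - (b + c) = a by omega, show a + b + c - (a + c) = b by omega,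
    show a + b + c - (a + b) = c by omega]

theorem tripleCoeff_of_not_exists {k l m : ℕ} (h : ¬∃ a b c, k = b + c ∧ l = a + c ∧ m = a + b) :
    tripleCoeff k l m = 0 := by
  rw [tripleCoeff, if_neg h]

theorem tripleCoeff_comm (k l m : ℕ) : tripleCoeff k l m = tripleCoeff l k m := by
  by_cases h : ∃ a b c, k = b + c ∧ l = a + c ∧ m = a + b
  · obtain ⟨a, b, c, hk, hl, hm⟩ := h
    rw [tripleCoeff_of_eq_add hk hl hm, tripleCoeff_of_eq_add hl hk (hm.trans (add_comm a b))]
    ring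
  · have h' : ¬∃ a b c, l = b + c ∧ k = a + c ∧ m = a + b := fun ⟨a, b, c, hl, hk, hm⟩ =>
      h ⟨b, a, c, hk, hl, hm.trans (add_comm a b)⟩
    rw [tripleCoeff_of_not_exists h, tripleCoeff_of_not_exists h']

theorem tripleCoeff_zero_right (k l : ℕ) : tripleCoeff k l 0 = if k = l then (k ! : ℝ) else 0 := by
  split_ifs with h
  · subst h
    rw [tripleCoeff_of_eq_add (a := 0) (b := 0) (c := k) (by simp) (by simp) rfl]
    simp
  · exact tripleCoeff_of_not_exists (by omega)

theorem natCast_mul_tripleCoeff_pred_left {k l m a b c : ℕ} (hk : k = b + c) (hl : l = a + c)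
    (hm : m + 1 = a + b) :
    (k : ℝ) * tripleCoeff (k - 1) l m = b * (k ! * l ! * m ! / (a ! * b ! * c !)) := by
  cases b with
  | zero =>
    rcases Nat.eq_zero_or_pos k with hk0 | hk0
    · simp [hk0]
    · rw [tripleCoeff_of_not_exists (by omega)]
      simp
  | succ b =>
    obtain ⟨j, rfl⟩ : ∃ j, k = j + 1 := ⟨b + c, by omega⟩
    rw [Nat.add_sub_cancel, tripleCoeff_of_eq_add (b := b) (by omega) hl (by omega),
      Nat.factorial_succ j, Nat.factorial_succ b]
    push_cast
    field_simp

theorem natCast_mul_tripleCoeff_pred_right {k l m a b c : ℕ} (hk : k = b + c) (hl : l = a + c)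
    (hm : m + 1 = a + b) :
    (l : ℝ) * tripleCoeff k (l - 1) m = a * (k ! * l ! * m ! / (a ! * b ! * c !)) := by
  rw [tripleCoeff_comm, natCast_mul_tripleCoeff_pred_left hl hk (hm.trans (add_comm a b))]
  ring

theorem natCast_mul_tripleCoeff_pred_left_of_not_exists {k l m : ℕ}
    (h : ¬∃ a b c, k = b + c ∧ l = a + c ∧ m + 1 = a + b) :
    (k : ℝ) * tripleCoeff (k - 1) l m = 0 := by
  rcases Nat.eq_zero_or_pos k with hk | hk
  · simp [hk]
  · rw [tripleCoeff_of_not_exists, mul_zero]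
    rintro ⟨a, b, c, hk', hl, hm⟩
    exact h ⟨a, b + 1, c, by omega, hl, by omega⟩

theorem tripleCoeff_succ_right (k l m : ℕ) :
    tripleCoeff k l (m + 1) = k * tripleCoeff (k - 1) l m + l * tripleCoeff k (l - 1) m := by
  by_cases h : ∃ a b c, k = b + c ∧ l = a + c ∧ m + 1 = a + b
  · obtain ⟨a, b, c, hk, hl, hm⟩ := h
    rw [tripleCoeff_of_eq_add hk hl hm, natCast_mul_tripleCoeff_pred_left hk hl hm,
      natCast_mul_tripleCoeff_pred_right hk hl hm, Nat.factorial_succ]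
    have hm' : ((m + 1 : ℕ) : ℝ) = a + b := by exact_mod_cast hm
    push_cast at hm' ⊢
    rw [hm']
    ring
  · have h' : ¬∃ a b c, l = b + c ∧ k = a + c ∧ m + 1 = a + b := fun ⟨a, b, c, hl, hk, hm⟩ =>
      h ⟨b, a, c, hk, hl, hm.trans (add_comm a b)⟩
    rw [tripleCoeff_of_not_exists h, natCast_mul_tripleCoeff_pred_left_of_not_exists h,
      tripleCoeff_comm k, natCast_mul_tripleCoeff_pred_left_of_not_exists h', add_zero]

theorem tripleCoeff_eq_sqrt_choose_mul_sqrt_factorial (k l m : ℕ) :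
    tripleCoeff k l m =
      (if Even (k + l + m) ∧ k - l ≤ m ∧ l - k ≤ m ∧ m ≤ k + l then
        √((k.choose ((k + l + m) / 2 - m) : ℝ) *
          (l.choose ((k + l + m) / 2 - m) : ℝ) * (m.choose ((k + l + m) / 2 - k) : ℝ))
      else 0) * √(k ! * l ! * m ! : ℝ) := by
  split_ifs with h
  · obtain ⟨a, b, c, rfl, rfl, rfl⟩ := (exists_add_iff_even_and_triangle k l m).2 h
    rw [tripleCoeff_of_eq_add rfl rfl rfl,
      show (b + c + (a + c) + (a + b)) / 2 = a + b + c by omega,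
      show a + b + c - (a + b) = c by omega, show a + b + c - (b + c) = a by omega,
      ← Nat.choose_symm_add (a := b), ← Nat.choose_symm_add (a := a) (b := c),
      Nat.cast_add_choose, Nat.cast_add_choose, Nat.cast_add_choose,
      ← sqrt_mul (by positivity), ← sqrt_sq (by positivity : (0 : ℝ) ≤ _ / (a ! * b ! * c ! : ℝ))]
    congr 1
    field_simp
  · rw [tripleCoeff_of_not_exists (mt (exists_add_iff_even_and_triangle k l m).1 h), zero_mul]

theorem gaussianExpectation_hermite_mul_hermite_mul_hermite (k l m : ℕ) :
    gaussianExpectation (hermite k * hermite l * hermite m) = tripleCoeff k l m := by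
  induction m generalizing k l with
  | zero =>
    rw [hermite_zero, C_1, mul_one, gaussianExpectation_hermite_mul_hermite, tripleCoeff_zero_right]
  | succ m ih =>
    rw [gaussianExpectation_hermite_mul_hermite_mul_hermite_succ, ih, ih, tripleCoeff_succ_right]

theorem H_eq_aeval_hermite_div (n : ℕ) (y : ℝ) : H n y = aeval y (hermite n) / √(n ! : ℝ) := by
  rw [H, iteratedDeriv_eq_iterate, hermite_eq_deriv_gaussian']
  simp only [neg_div]
  ring

theorem hermite_triple_product_integral (k l m : ℕ) :
    (∫ y : ℝ, H k y * H l y * H m y * gauss y) =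
      if Even (k + l + m) ∧ k - l ≤ m ∧ l - k ≤ m ∧ m ≤ k + l then
        Real.sqrt ((k.choose ((k + l + m) / 2 - m) : ℝ) *
          (l.choose ((k + l + m) / 2 - m) : ℝ) * (m.choose ((k + l + m) / 2 - k) : ℝ))
      else 0 := by
  have hnorm : (∫ y : ℝ, H k y * H l y * H m y * gauss y) =
      gaussianExpectation (hermite k * hermite l * hermite m) / √(k ! * l ! * m ! : ℝ) := by
    rw [gaussianExpectation_apply, ← integral_div]
    congr 1 with y
    rw [sqrt_mul (x := (k ! * l ! : ℝ)) (by positivity), sqrt_mul (by positivity)]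
    simp only [H_eq_aeval_hermite_div, map_mul]
    field_simp
  rw [hnorm, gaussianExpectation_hermite_mul_hermite_mul_hermite,
    tripleCoeff_eq_sqrt_choose_mul_sqrt_factorial, mul_div_cancel_right₀ _ (by positivity)]
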